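/- The number of smooth collections of length n is even for every n ≥ 1, and equals twice the number of smooth collections (S_1,...,S_n) satisfying: for all m = 1,...,n, if 1 ∈ S_m then n+1 ∈ S_m. -/

import Mathlib

/-- A collection `S` of subsets `S 1, ..., S n` of `{1, ..., n+1}` is smooth if
`#S i = i`, `S i ⊆ S (i+1)`, and for all `1 ≤ a < b ≤ n`, `b ∈ S a → a+1 ∈ S b`;
`S i = ∅` outside the range `1 ≤ i ≤ n`. -/
def IsSmooth (n : ℕ) (S : ℕ → Finset ℕ) : Prop :=
  (∀ i, i = 0 ∨ n < i → S i = ∅) ∧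
  (∀ i, 1 ≤ i → i ≤ n → S i ⊆ Finset.Icc 1 (n + 1) ∧ (S i).card = i) ∧
  (∀ i, 1 ≤ i → i < n → S i ⊆ S (i + 1)) ∧
  (∀ a b, 1 ≤ a → a < b → b ≤ n → b ∈ S a → a + 1 ∈ S b)

/-!
Swapping `1` and `n + 1` in every set preserves smoothness, since the conditions only involve
cardinalities and the elements `2, …, n`. Each step of the chain `S 1 ⊆ ⋯ ⊆ S n` adds one element
and `S n` misses only one element of `{1, …, n + 1}`, so `1` and `n + 1` cannot both stay out of
the chain nor enter it at the same step: exactly one of them enters first. The swap exchanges the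
two cases, so the collections in which `n + 1` enters first are half of all.
-/

open Function Finset

theorem Set.ncard_eq_two_mul_ncard_sep_of_involutive {α : Type*} {s : Set α} {f : α → α}
    {p : α → Prop} (hf : Involutive f) (hs : s.Finite) (hfs : Set.MapsTo f s s)
    (hp : ∀ x ∈ s, p (f x) ↔ ¬ p x) :
    s.ncard = 2 * {x ∈ s | p x}.ncard := by
  set t := {x ∈ s | p x}
  have ht : t.Finite := hs.subset (Set.sep_subset s p)
  have hsplit : s = t ∪ f '' t := by
    ext x
    constructor
    · intro hx
      by_cases px : p x
      · exact Or.inl ⟨hx, px⟩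
      · exact Or.inr ⟨f x, ⟨hfs hx, (hp x hx).2 px⟩, hf x⟩
    · rintro (⟨hx, -⟩ | ⟨y, ⟨hy, -⟩, rfl⟩)
      exacts [hx, hfs hy]
  have hdisj : Disjoint t (f '' t) := by
    rw [Set.disjoint_left]
    rintro _ hpx ⟨y, ⟨hy, hpy⟩, rfl⟩
    exact (hp y hy).1 hpx.2 hpy
  calc s.ncard = (t ∪ f '' t).ncard := congrArg Set.ncard hsplit
    _ = 2 * t.ncard := by
      rw [Set.ncard_union_eq hdisj ht (ht.image f), Set.ncard_image_of_injective t hf.injective,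
        two_mul]

namespace IsSmooth

variable {n : ℕ} {S : ℕ → Finset ℕ}

lemma eq_empty_of_lt (hS : IsSmooth n S) {i : ℕ} (hi : n < i) : S i = ∅ :=
  hS.1 i (Or.inr hi)

lemma zero (hS : IsSmooth n S) : S 0 = ∅ :=
  hS.1 0 (Or.inl rfl)

lemma subset_Icc (hS : IsSmooth n S) (i : ℕ) : S i ⊆ Icc 1 (n + 1) := by
  rcases Nat.eq_zero_or_pos i with rfl | hi0
  · simp [hS.zero]
  rcases le_or_gt i n with hin | hin
  · exact (hS.2.1 i hi0 hin).1
  · simp [hS.eq_empty_of_lt hin]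

lemma card_eq (hS : IsSmooth n S) {i : ℕ} (hi : i ≤ n) : #(S i) = i := by
  rcases Nat.eq_zero_or_pos i with rfl | hi0
  · simp [hS.zero]
  · exact (hS.2.1 i hi0 hi).2

lemma subset_succ (hS : IsSmooth n S) {i : ℕ} (hi : i < n) : S i ⊆ S (i + 1) := by
  rcases Nat.eq_zero_or_pos i with rfl | hi0
  · simp [hS.zero]
  · exact hS.2.2.1 i hi0 hi

lemma mono (hS : IsSmooth n S) {i j : ℕ} (hij : i ≤ j) (hj : j ≤ n) : S i ⊆ S j := by
  induction j, hij using Nat.le_induction with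
  | base => exact subset_rfl
  | succ j hij ih => exact (ih (by omega)).trans (hS.subset_succ (by omega))

lemma card_sdiff_succ (hS : IsSmooth n S) {i : ℕ} (hi : i < n) : #(S (i + 1) \ S i) = 1 := by
  rw [card_sdiff_of_subset (hS.subset_succ hi), hS.card_eq hi, hS.card_eq hi.le]
  omega

lemma one_mem_or_mem (hS : IsSmooth n S) (hn : 1 ≤ n) : 1 ∈ S n ∨ n + 1 ∈ S n := by
  by_contra! h
  have hsub : S n ⊆ Icc 2 n := fun a ha => by
    have := mem_Icc.1 (hS.subset_Icc n ha)
    have : a ≠ 1 := fun h1 => h.1 (h1 ▸ ha)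
    have : a ≠ n + 1 := fun h1 => h.2 (h1 ▸ ha)
    simp only [mem_Icc]
    omega
  have := card_le_card hsub
  rw [hS.card_eq le_rfl, Nat.card_Icc] at this
  omega

lemma not_forall_one_mem_iff (hS : IsSmooth n S) (hn : 1 ≤ n) :
    ¬ ∀ m, 1 ≤ m → m ≤ n → (1 ∈ S m ↔ n + 1 ∈ S m) := by
  intro h
  have h1n : 1 ∈ S n := (hS.one_mem_or_mem hn).elim id (h n hn le_rfl).2
  have hex : ∃ m, 1 ∈ S m := ⟨n, h1n⟩
  obtain ⟨k, hk⟩ : ∃ k, Nat.find hex = k + 1 :=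
    Nat.exists_eq_succ_of_ne_zero fun h0 => by simpa [h0, hS.zero] using Nat.find_spec hex
  have hkn : k < n := by have := Nat.find_min' hex h1n; omega
  have h1 : 1 ∈ S (k + 1) := hk ▸ Nat.find_spec hex
  have h1' : 1 ∉ S k := Nat.find_min hex (by omega)
  have hlast : n + 1 ∈ S (k + 1) := (h (k + 1) (by omega) (by omega)).1 h1
  have hlast' : n + 1 ∉ S k := fun hk' => by
    have hk0 : 1 ≤ k := Nat.pos_of_ne_zero fun h0 => by simp [h0, hS.zero] at hk'
    exact h1' ((h k hk0 hkn.le).2 hk')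
  have := card_le_one.1 (hS.card_sdiff_succ hkn).le _ (mem_sdiff.2 ⟨h1, h1'⟩) _
    (mem_sdiff.2 ⟨hlast, hlast'⟩)
  omega

lemma finite_setOf (n : ℕ) : {S : ℕ → Finset ℕ | IsSmooth n S}.Finite := by
  let restrict (S : ℕ → Finset ℕ) : Fin (n + 1) → Finset ℕ := fun i => S i
  refine Set.Finite.of_finite_image (f := restrict) ?_ ?_
  · refine (Set.Finite.pi fun _ => (Icc 1 (n + 1)).powerset.finite_toSet).subset ?_
    rintro _ ⟨S, hS, rfl⟩ i -
    exact mem_coe.2 (mem_powerset.2 (hS.subset_Icc i))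
  · intro S hS T hT hST
    funext i
    rcases le_or_gt i n with hi | hi
    · exact congrFun hST ⟨i, Nat.lt_succ_of_le hi⟩
    · rw [hS.eq_empty_of_lt hi, hT.eq_empty_of_lt hi]

end IsSmooth

def permMap (σ : Equiv.Perm ℕ) (S : ℕ → Finset ℕ) (i : ℕ) : Finset ℕ :=
  (S i).map σ.toEmbedding

lemma mem_permMap {σ : Equiv.Perm ℕ} {S : ℕ → Finset ℕ} {i a : ℕ} :
    a ∈ permMap σ S i ↔ σ.symm a ∈ S i :=
  mem_map_equiv

lemma involutive_permMap_swap (a b : ℕ) : Involutive (permMap (Equiv.swap a b)) := by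
  intro S
  funext i
  ext x
  simp [mem_permMap]

lemma IsSmooth.map_perm {n : ℕ} {S : ℕ → Finset ℕ} (hS : IsSmooth n S) {σ : Equiv.Perm ℕ}
    (hfix : ∀ b, 2 ≤ b → b ≤ n → σ b = b) (hIcc : ∀ a ∈ Icc 1 (n + 1), σ a ∈ Icc 1 (n + 1)) :
    IsSmooth n (permMap σ S) := by
  have hfix' : ∀ b, 2 ≤ b → b ≤ n → σ.symm b = b := fun b h2 hb =>
    σ.symm_apply_eq.2 (hfix b h2 hb).symm
  refine ⟨fun i hi => by simp [permMap, hS.1 i hi], fun i hi hin => ⟨?_, ?_⟩,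
    fun i hi hin => map_subset_map.2 (hS.2.2.1 i hi hin), fun a b ha hab hbn hb => ?_⟩
  · intro x hx
    obtain ⟨y, hy, rfl⟩ := mem_map.1 hx
    exact hIcc y (hS.subset_Icc i hy)
  · rw [permMap, card_map, hS.card_eq hin]
  · rw [mem_permMap, hfix' b (by omega) hbn] at hb
    rw [mem_permMap, hfix' (a + 1) (by omega) (by omega)]
    exact hS.2.2.2 a b ha hab hbn hb

lemma IsSmooth.map_swap {n : ℕ} {S : ℕ → Finset ℕ} (hS : IsSmooth n S) :
    IsSmooth n (permMap (Equiv.swap 1 (n + 1)) S) := by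
  refine hS.map_perm (fun _ _ _ => Equiv.swap_apply_of_ne_of_ne (by omega) (by omega))
    fun a ha => ?_
  rcases eq_or_ne a 1 with rfl | h1
  · simp
  rcases eq_or_ne a (n + 1) with rfl | h2
  · simp
  · rwa [Equiv.swap_apply_of_ne_of_ne h1 h2]

/-- `n + 1` enters the chain `S 1 ⊆ ⋯ ⊆ S n` no later than `1` does. -/
def TopEntersFirst (n : ℕ) (S : ℕ → Finset ℕ) : Prop :=
  ∀ m, 1 ≤ m → m ≤ n → 1 ∈ S m → n + 1 ∈ S m

lemma topEntersFirst_permMap_swap_iff {n : ℕ} {S : ℕ → Finset ℕ} :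
    TopEntersFirst n (permMap (Equiv.swap 1 (n + 1)) S) ↔
      ∀ m, 1 ≤ m → m ≤ n → n + 1 ∈ S m → 1 ∈ S m := by
  simp only [TopEntersFirst, mem_permMap, Equiv.symm_swap, Equiv.swap_apply_left,
    Equiv.swap_apply_right]

lemma IsSmooth.topEntersFirst_map_swap_iff {n : ℕ} {S : ℕ → Finset ℕ} (hS : IsSmooth n S)
    (hn : 1 ≤ n) :
    TopEntersFirst n (permMap (Equiv.swap 1 (n + 1)) S) ↔ ¬ TopEntersFirst n S := by
  rw [topEntersFirst_permMap_swap_iff]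
  constructor
  · intro hbot htop
    exact hS.not_forall_one_mem_iff hn fun m hm hmn => ⟨htop m hm hmn, hbot m hm hmn⟩
  · intro htop m hm hmn hlast
    obtain ⟨m', hm', hm'n, h1, hlast'⟩ : ∃ m', 1 ≤ m' ∧ m' ≤ n ∧ 1 ∈ S m' ∧ n + 1 ∉ S m' := by
      simpa [TopEntersFirst] using htop
    by_contra h1m
    rcases le_total m m' with hle | hle
    · exact hlast' (hS.mono hle hm'n hlast)
    · exact h1m (hS.mono hle hmn h1)

/-- The number of smooth collections of length `n ≥ 1` is even, and equals twice the number
of smooth collections such that `1 ∈ S m` implies `n+1 ∈ S m` for all `m`. -/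
theorem stmt_7 (n : ℕ) (hn : 1 ≤ n) :
    Even (Set.ncard {S : ℕ → Finset ℕ | IsSmooth n S}) ∧
    Set.ncard {S : ℕ → Finset ℕ | IsSmooth n S} =
      2 * Set.ncard {S : ℕ → Finset ℕ | IsSmooth n S ∧
        ∀ m, 1 ≤ m → m ≤ n → 1 ∈ S m → n + 1 ∈ S m} := by
  have key : Set.ncard {S : ℕ → Finset ℕ | IsSmooth n S} =
      2 * Set.ncard {S ∈ {S : ℕ → Finset ℕ | IsSmooth n S} | TopEntersFirst n S} :=
    Set.ncard_eq_two_mul_ncard_sep_of_involutive (involutive_permMap_swap 1 (n + 1))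
      (IsSmooth.finite_setOf n) (fun _ hS => hS.map_swap)
      fun _ hS => hS.topEntersFirst_map_swap_iff hn
  exact ⟨⟨_, key.trans (two_mul _)⟩, key⟩
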